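/- Let n ≥ 2 and let i ∈ I_n. If e(i) ≠ 0 in the cyclotomic KLR algebra R_n, then i_1 = 0 and for every k with 2 ≤ k ≤ n there exists l < k such that i_k = i_l + 1 or i_k = i_l − 1 in ℤ/nℤ (i.e. each new entry is a neighbor, in the cycle ℤ/nℤ, of some earlier entry). -/
import Mathlib


open scoped BigOperators

/-- `I_n`: the sequences `(i_1,…,i_n)` of elements of `ZMod n` that are permutations of
`(0,1,…,n−1)`, encoded as bijections `Fin n → ZMod n` (position `k : Fin n` is the
0-based version of the paper's position `k+1`). -/
def KLRSeq (n : ℕ) : Type := {f : Fin n → ZMod n // Function.Bijective f}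

instance (n : ℕ) : Finite (KLRSeq n) := by
  unfold KLRSeq
  rcases Nat.eq_zero_or_pos n with h | h
  · subst h
    have : IsEmpty {f : Fin 0 → ZMod 0 // Function.Bijective f} := by
      constructor
      rintro ⟨f, hf⟩
      obtain ⟨x, -⟩ := hf.2 0
      exact x.elim0
    infer_instance
  · haveI : NeZero n := ⟨by omega⟩
    infer_instance

noncomputable instance (n : ℕ) : Fintype (KLRSeq n) := Fintype.ofFinite _

noncomputable instance (n : ℕ) : DecidableEq (KLRSeq n) := Classical.decEq _

/-- Generators of the KLR algebra: idempotents `e(i)`, dots `y_k`, crossings `ψ_k`. -/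
inductive KLRGen (n : ℕ) : Type
  | e : KLRSeq n → KLRGen n
  | y : Fin n → KLRGen n
  | psi : Fin (n - 1) → KLRGen n

/-- The free algebra on the KLR generators. -/
abbrev KLRFree (K : Type) [Field K] (n : ℕ) := FreeAlgebra K (KLRGen n)

namespace KLR

/-- `e(i)` in the free algebra. -/
def E (K : Type) [Field K] {n : ℕ} (i : KLRSeq n) : KLRFree K n :=
  FreeAlgebra.ι K (KLRGen.e i)

/-- `y_k` in the free algebra. -/
def Y (K : Type) [Field K] {n : ℕ} (k : Fin n) : KLRFree K n :=
  FreeAlgebra.ι K (KLRGen.y k)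

/-- `ψ_k` in the free algebra. -/
def P (K : Type) [Field K] {n : ℕ} (k : Fin (n - 1)) : KLRFree K n :=
  FreeAlgebra.ι K (KLRGen.psi k)

/-- The first strand position crossed by `ψ_k`. -/
def pos0 {n : ℕ} (k : Fin (n - 1)) : Fin n := ⟨k.val, by have := k.isLt; omega⟩

/-- The second strand position crossed by `ψ_k`. -/
def pos1 {n : ℕ} (k : Fin (n - 1)) : Fin n := ⟨k.val + 1, by have := k.isLt; omega⟩

/-- The sequence `s_k · i`, with entries `k` and `k+1` swapped. -/
def swapSeq {n : ℕ} (k : Fin (n - 1)) (i : KLRSeq n) : KLRSeq n :=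
  ⟨i.1 ∘ Equiv.swap (pos0 k) (pos1 k), i.2.comp (Equiv.swap _ _).bijective⟩

/-- The right-hand side of the quadratic relation `ψ_k² e(i) = …`, depending on how the
colors `i_k` and `i_{k+1}` are related in the quiver of affine type A on `ZMod n`
(`a → b` iff `b = a + 1` and `a ≠ b + 1`, etc.). -/
noncomputable def quadTerm (K : Type) [Field K] {n : ℕ} (k : Fin (n - 1)) (i : KLRSeq n) :
    KLRFree K n :=
  let a := i.1 (pos0 k)
  let b := i.1 (pos1 k)
  if b = a + 1 ∧ a = b + 1 then
    (Y K (pos1 k) - Y K (pos0 k)) * ((Y K (pos0 k) - Y K (pos1 k)) * E K i)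
  else if b = a + 1 ∧ a ≠ b + 1 then (Y K (pos1 k) - Y K (pos0 k)) * E K i
  else if a = b + 1 ∧ b ≠ a + 1 then (Y K (pos0 k) - Y K (pos1 k)) * E K i
  else E K i

/-- The defining relations of the cyclotomic KLR algebra `R_n` (for `Λ = Λ_0`):
the KLR relations together with the cyclotomic relations `y_1 e(i) = 0` (if `i_1 = 0`) and
`e(i) = 0` (if `i_1 ≠ 0`). -/
inductive Rel (K : Type) [Field K] (n : ℕ) : KLRFree K n → KLRFree K n → Prop
  | idem (i j : KLRSeq n) : Rel K n (E K i * E K j) (if i = j then E K i else 0)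
  | sum_eq_one : Rel K n (∑ i : KLRSeq n, E K i) 1
  | ye (k : Fin n) (i : KLRSeq n) : Rel K n (Y K k * E K i) (E K i * Y K k)
  | psie (k : Fin (n - 1)) (i : KLRSeq n) :
      Rel K n (P K k * E K i) (E K (swapSeq k i) * P K k)
  | yy (k l : Fin n) : Rel K n (Y K k * Y K l) (Y K l * Y K k)
  | psiy (k : Fin (n - 1)) (l : Fin n) (h : l.val ≠ k.val ∧ l.val ≠ k.val + 1) :
      Rel K n (P K k * Y K l) (Y K l * P K k)
  | psipsi (k l : Fin (n - 1)) (h : k.val + 1 < l.val ∨ l.val + 1 < k.val) :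
      Rel K n (P K k * P K l) (P K l * P K k)
  | psiy1 (k : Fin (n - 1)) (i : KLRSeq n) :
      Rel K n (P K k * (Y K (pos1 k) * E K i)) (Y K (pos0 k) * (P K k * E K i))
  | ypsi (k : Fin (n - 1)) (i : KLRSeq n) :
      Rel K n (Y K (pos1 k) * (P K k * E K i)) (P K k * (Y K (pos0 k) * E K i))
  | sq (k : Fin (n - 1)) (i : KLRSeq n) :
      Rel K n (P K k * (P K k * E K i)) (quadTerm K k i)
  | braid (k : Fin (n - 1)) (h : k.val + 1 < n - 1) (i : KLRSeq n) :
      Rel K n (P K k * (P K ⟨k.val + 1, h⟩ * (P K k * E K i)))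
              (P K ⟨k.val + 1, h⟩ * (P K k * (P K ⟨k.val + 1, h⟩ * E K i)))
  | cyc0 (hn : 0 < n) (i : KLRSeq n) (h : i.1 ⟨0, hn⟩ = 0) :
      Rel K n (Y K ⟨0, hn⟩ * E K i) 0
  | cyc1 (hn : 0 < n) (i : KLRSeq n) (h : i.1 ⟨0, hn⟩ ≠ 0) :
      Rel K n (E K i) 0

end KLR

/-- The cyclotomic KLR algebra `R_n` (quiver of affine type A on `ZMod n`, `α` the sum of
all simple roots, `Λ = Λ_0`): the quotient of the free algebra on the generators by the
two-sided ideal generated by the relation differences and the cyclotomic generators. -/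
abbrev CKLR (K : Type) [Field K] (n : ℕ) := RingQuot (KLR.Rel K n)

namespace KLR

/-- The quotient map from the free algebra to `R_n`. -/
noncomputable def mk (K : Type) [Field K] (n : ℕ) : KLRFree K n →ₐ[K] CKLR K n :=
  RingQuot.mkAlgHom K (Rel K n)

/-- The idempotent `e(i)` in `R_n`. -/
noncomputable def e (K : Type) [Field K] {n : ℕ} (i : KLRSeq n) : CKLR K n := mk K n (E K i)

/-- The dot `y_k` in `R_n`. -/
noncomputable def y (K : Type) [Field K] {n : ℕ} (k : Fin n) : CKLR K n := mk K n (Y K k)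

/-- The crossing `ψ_k` in `R_n`. -/
noncomputable def p (K : Type) [Field K] {n : ℕ} (k : Fin (n - 1)) : CKLR K n := mk K n (P K k)

end KLR


namespace KLR
variable {K : Type} [Field K] {n : ℕ}

lemma mk_rel {a b : KLRFree K n} (h : Rel K n a b) : mk K n a = mk K n b :=
  RingQuot.mkAlgHom_rel K h

lemma e_zero_of_first_ne (hn : 0 < n) (i : KLRSeq n) (h : i.1 ⟨0, hn⟩ ≠ 0) :
    e K i = 0 := by
  have := mk_rel (Rel.cyc1 (K := K) hn i h)
  simpa [e] using this

lemma p_e (k : Fin (n - 1)) (i : KLRSeq n) :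
    p K k * e K i = e K (swapSeq k i) * p K k := by
  have := mk_rel (Rel.psie (K := K) k i)
  simpa [p, e, map_mul] using this

lemma e_eq_pep (k : Fin (n - 1)) (i : KLRSeq n)
    (h1 : i.1 (pos1 k) ≠ i.1 (pos0 k) + 1) (h2 : i.1 (pos0 k) ≠ i.1 (pos1 k) + 1) :
    e K i = p K k * (e K (swapSeq k i) * p K k) := by
  have hq : quadTerm K k i = E K i := by
    rw [quadTerm]
    split_ifs with hc1 hc2 hc3
    · exact absurd hc1.1 h1
    · exact absurd hc2.1 h1
    · exact absurd hc3.1 h2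
    · rfl
  have hsq := mk_rel (Rel.sq (K := K) k i)
  rw [hq] at hsq
  calc e K i = p K k * (p K k * e K i) := by
        simpa [p, e, map_mul] using hsq.symm
    _ = p K k * (e K (swapSeq k i) * p K k) := by rw [p_e]

end KLR

/-- for `n ≥ 2`, if `e(i) ≠ 0` in `R_n` then `i_1 = 0` and every later entry
of `i` is a neighbor, in the cycle `ZMod n`, of some earlier entry. -/
theorem stmt_3 (K : Type) [Field K] (n : ℕ) (hn : 2 ≤ n) (i : KLRSeq n)
    (h : KLR.e K i ≠ 0) :
    i.1 ⟨0, by omega⟩ = 0 ∧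
    ∀ k : Fin n, 1 ≤ k.val →
      ∃ l : Fin n, l < k ∧ (i.1 k = i.1 l + 1 ∨ i.1 k = i.1 l - 1) := by
  have hn0 : 0 < n := by omega
  have h1 : i.1 ⟨0, by omega⟩ = 0 := by
    by_contra hne
    exact h (KLR.e_zero_of_first_ne hn0 i hne)
  refine ⟨h1, ?_⟩
  intro k hk1
  by_contra hk
  push_neg at hk
  have hik : i.1 k ≠ 0 := by
    intro h0
    have hk0 : k = ⟨0, hn0⟩ := i.2.1 (by rw [h0, h1])
    rw [hk0] at hk1
    simp at hk1
  have key : ∀ d : ℕ, d ≤ k.val → ∃ (j : KLRSeq n) (x y : CKLR K n),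
      (∀ t : Fin n, t.val < k.val - d → j.1 t = i.1 t) ∧
      (j.1 ⟨k.val - d, by omega⟩ = i.1 k) ∧
      KLR.e K i = x * (KLR.e K j * y) := by
    intro d
    induction d with
    | zero =>
        intro _
        refine ⟨i, 1, 1, fun t _ => rfl, ?_, by simp⟩
        have : (⟨k.val - 0, by omega⟩ : Fin n) = k := Fin.ext (by simp)
        rw [this]
    | succ d ih =>
        intro hd
        obtain ⟨j, x, y, hlow, hpos, heq⟩ := ih (by omega)
        have hklt := k.isLt
        have hm : k.val - d - 1 < n - 1 := by omega
        set m : ℕ := k.val - d - 1 with hmdef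
        set km : Fin (n - 1) := ⟨m, hm⟩ with hkmdef
        have hmn : m < n := by omega
        have hp0v : (KLR.pos0 km) = (⟨m, hmn⟩ : Fin n) := rfl
        have hp1v : (KLR.pos1 km) = (⟨k.val - d, by omega⟩ : Fin n) :=
          Fin.ext (by simp [KLR.pos1, hkmdef]; omega)
        have hp0 : j.1 (KLR.pos0 km) = i.1 ⟨m, hmn⟩ := by
          rw [hp0v]; exact hlow _ (by simp; omega)
        have hp1 : j.1 (KLR.pos1 km) = i.1 k := by rw [hp1v]; exact hpos
        have hltk : (⟨m, hmn⟩ : Fin n) < k := by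
          simp [Fin.lt_def]; omega
        have hA : j.1 (KLR.pos1 km) ≠ j.1 (KLR.pos0 km) + 1 := by
          rw [hp0, hp1]; exact (hk _ hltk).1
        have hB : j.1 (KLR.pos0 km) ≠ j.1 (KLR.pos1 km) + 1 := by
          rw [hp0, hp1]
          intro hc
          exact (hk _ hltk).2 (by rw [hc]; ring)
        refine ⟨KLR.swapSeq km j, x * KLR.p K km, KLR.p K km * y, ?_, ?_, ?_⟩
        · intro t ht
          have htm : t.val < m := by omega
          have h0 : t ≠ KLR.pos0 km := by
            rw [hp0v]; intro hc; rw [hc] at htm; simp at htm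
          have h1' : t ≠ KLR.pos1 km := by
            intro hc
            have := congrArg Fin.val hc
            simp [KLR.pos1, hkmdef] at this
            omega
          show j.1 (Equiv.swap (KLR.pos0 km) (KLR.pos1 km) t) = i.1 t
          rw [Equiv.swap_apply_of_ne_of_ne h0 h1']
          exact hlow t (by omega)
        · have hfe : (⟨k.val - (d + 1), by omega⟩ : Fin n) = KLR.pos0 km := by
            rw [hp0v]; exact Fin.ext (by simp; omega)
          rw [hfe]
          show j.1 (Equiv.swap (KLR.pos0 km) (KLR.pos1 km) (KLR.pos0 km)) = i.1 k
          rw [Equiv.swap_apply_left]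
          exact hp1
        · rw [heq, KLR.e_eq_pep km j hA hB]
          simp [mul_assoc]
  obtain ⟨j, x, y, -, hpos, heq⟩ := key k.val le_rfl
  have hj0 : j.1 ⟨0, hn0⟩ ≠ 0 := by
    have hfe : (⟨k.val - k.val, by omega⟩ : Fin n) = (⟨0, hn0⟩ : Fin n) :=
      Fin.ext (by simp)
    rw [hfe] at hpos
    rw [hpos]; exact hik
  have : KLR.e K j = 0 := KLR.e_zero_of_first_ne hn0 j hj0
  rw [this] at heq
  simp at heq
  exact h heq
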